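/- Let (X_t : t ∈ T) be a family of topological spaces, X = ∏_{t∈T} X_t, a = (a_t)_{t∈T} ∈ X, let (Y,d) be a metric space, and let f : (σ(a),τ) → Y be a strongly separately continuous mapping, where σ(a) carries the subspace Tychonoff topology. Then the set D(f) of points of σ(a) at which f is discontinuous is nearly open in (σ(a),τ). -/

import Mathlib

open Function Filter Topology

/-- `Sigma1 x` (σ₁(x)): the set of points differing from `x` in at most one coordinate. -/
def Sigma1 {T : Type*} {X : T → Type*} (x : ∀ t, X t) : Set (∀ t, X t) :=
  {y | {t | y t ≠ x t}.Subsingleton}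

/-- `SigmaProd x` (σ(x)): the set of points differing from `x` in at most finitely many
coordinates. -/
def SigmaProd {T : Type*} {X : T → Type*} (x : ∀ t, X t) : Set (∀ t, X t) :=
  {y | {t | y t ≠ x t}.Finite}

/-- A set `A` is `S`-open if `σ₁(x) ⊆ A` for every `x ∈ A`. -/
def SOpen {T : Type*} {X : T → Type*} (A : Set (∀ t, X t)) : Prop :=
  ∀ x ∈ A, Sigma1 x ⊆ A

theorem update_mem {T : Type*} [DecidableEq T] {X : T → Type*} {A : Set (∀ t, X t)}
    (hA : SOpen A) {x : ∀ t, X t} (hx : x ∈ A) (t : T) (v : X t) :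
    Function.update x t v ∈ A := by
  apply hA x hx
  intro s hs s' hs'
  simp only [Set.mem_setOf_eq] at hs hs'
  have h1 : s = t := by
    by_contra h
    exact hs (Function.update_of_ne h v x)
  have h2 : s' = t := by
    by_contra h
    exact hs' (Function.update_of_ne h v x)
  rw [h1, h2]

/-- The point `x_t^v`: `x` with its `t`-th coordinate replaced by `v`, as an element
of the `S`-open set `A`. -/
def updPt {T : Type*} [DecidableEq T] {X : T → Type*} {A : Set (∀ t, X t)}
    (hA : SOpen A) (x : ↥A) (t : T) (v : X t) : ↥A :=
  ⟨Function.update x.1 t v, update_mem hA x.2 t v⟩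

/-- `f : (A, T') → Y` is strongly separately continuous at `a` (w.r.t. every variable):
for each `t`, `lim_{x → a} dist (f x) (f (x_t^a)) = 0`, the limit taken in `T'`. -/
def StrSepContAt {T : Type*} [DecidableEq T] {X : T → Type*} {A : Set (∀ t, X t)}
    (hA : SOpen A) (T' : TopologicalSpace ↥A) {Y : Type*} [MetricSpace Y]
    (f : ↥A → Y) (a : ↥A) : Prop :=
  ∀ t : T, Filter.Tendsto (fun x : ↥A => dist (f x) (f (updPt hA x t (a.1 t))))
    (@nhds _ T' a) (nhds 0)

theorem sOpen_sigmaProd {T : Type*} {X : T → Type*} (a : ∀ t, X t) :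
    SOpen (SigmaProd a) := by
  intro x hx y hy
  have hsub : {t | y t ≠ a t} ⊆ {t | y t ≠ x t} ∪ {t | x t ≠ a t} := by
    intro t ht
    rw [Set.mem_union]
    by_contra h
    push_neg at h
    simp only [Set.mem_setOf_eq, not_not] at h
    exact ht (h.1.trans h.2)
  exact Set.Finite.subset (Set.Finite.union hy.finite hx) hsub

/-- The point `a_{T0}^z`: coordinates in `T0` taken from `z`, the rest from `a`. -/
def glue {T : Type*} [DecidableEq T] {X : T → Type*} (a : ∀ t, X t) (T0 : Finset T)
    (z : ∀ t : T0, X t.1) : ∀ t, X t :=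
  fun s => if h : s ∈ T0 then z ⟨s, h⟩ else a s

theorem glue_mem {T : Type*} [DecidableEq T] {X : T → Type*} (a : ∀ t, X t)
    (T0 : Finset T) (z : ∀ t : T0, X t.1) : glue a T0 z ∈ SigmaProd a := by
  apply Set.Finite.subset T0.finite_toSet
  intro s hs
  simp only [SigmaProd, Set.mem_setOf_eq, glue] at hs
  by_contra h
  rw [dif_neg (by simpa using h)] at hs
  exact hs rfl

/-- `W ⊆ σ(a)` is nearly open: for every finite `T0 ⊆ T`, the set
`{z ∈ ∏_{t ∈ T0} X t : a_{T0}^z ∈ W}` is open in the finite product. -/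
def NearlyOpen {T : Type*} [DecidableEq T] {X : T → Type*} [∀ t, TopologicalSpace (X t)]
    (a : ∀ t, X t) (W : Set ↥(SigmaProd a)) : Prop :=
  ∀ T0 : Finset T, IsOpen {z : ∀ t : T0, X t.1 |
    (⟨glue a T0 z, glue_mem a T0 z⟩ : ↥(SigmaProd a)) ∈ W}


/-!
Fix a finite `S ⊆ T`, and for `p ∈ σ(a)` let `R_p` replace the coordinates in `S` by those of
`p`. Applying strong separate continuity once per coordinate of `S` gives
`d(f x, f (R_u x)) → 0` as `x → u`. Now let `u = a_S^{z₀}` be a discontinuity point with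
oscillation at least `ε`, and let `v = a_S^z` be a continuity point so close to `u` that
`d(f y, f (R_u y)) < ε/4` for all `y` near `v`. For `x` near `u`, the point `R_v x` is near `v`
and `R_u (R_v x) = R_u x`, so the chain `x, R_u x, R_v x, v, u = R_u v` has four steps of
length `< ε/4`: `f` would have oscillation `< ε` at `u`. Hence every `a_S^z` near `u` is a
discontinuity point.
-/

section Piecewise

variable {T : Type*} [DecidableEq T] {X : T → Type*}

theorem piecewise_mem_sigmaProd {a x : ∀ t, X t} (S : Finset T) (b : ∀ t, X t)
    (hx : x ∈ SigmaProd a) : S.piecewise b x ∈ SigmaProd a := by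
  refine (S.finite_toSet.union hx).subset fun s hs => ?_
  by_cases h : s ∈ S
  · exact Or.inl h
  · exact Or.inr (by simpa [h] using hs)

def piecewisePt {a : ∀ t, X t} (S : Finset T) (b : ∀ t, X t) (x : ↥(SigmaProd a)) :
    ↥(SigmaProd a) :=
  ⟨S.piecewise b x, piecewise_mem_sigmaProd S b x.2⟩

variable {a : ∀ t, X t}

@[simp]
theorem piecewisePt_self (S : Finset T) (u : ↥(SigmaProd a)) : piecewisePt S u.1 u = u :=
  Subtype.ext (S.piecewise_same u.1)

@[simp]
theorem piecewisePt_piecewisePt (S : Finset T) (b c : ∀ t, X t) (x : ↥(SigmaProd a)) :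
    piecewisePt S b (piecewisePt S c x) = piecewisePt S b x :=
  Subtype.ext (S.piecewise_idem_right b c x.1)

theorem piecewisePt_insert (t : T) (S : Finset T) (b : ∀ t, X t) (x : ↥(SigmaProd a)) :
    piecewisePt (insert t S) b x = updPt (sOpen_sigmaProd a) (piecewisePt S b x) t (b t) :=
  Subtype.ext (S.piecewise_insert b x.1 t)

theorem piecewisePt_glue (S : Finset T) (z z' : ∀ t : S, X t.1) :
    piecewisePt S (glue a S z) ⟨glue a S z', glue_mem a S z'⟩ = ⟨glue a S z, glue_mem a S z⟩ := by
  ext s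
  by_cases h : s ∈ S <;> simp [piecewisePt, glue, h]

variable [∀ t, TopologicalSpace (X t)]

theorem continuous_piecewisePt (S : Finset T) (b : ∀ t, X t) :
    Continuous (piecewisePt (a := a) S b) := by
  refine Continuous.subtype_mk (continuous_pi fun s => ?_) _
  by_cases h : s ∈ S
  · simpa [h] using continuous_const
  · simpa [h, Function.comp_def] using (continuous_apply s).comp continuous_subtype_val

theorem continuous_glue (S : Finset T) : Continuous (glue a S) := by
  refine continuous_pi fun s => ?_
  by_cases h : s ∈ S
  · simpa [glue, h] using continuous_apply (⟨s, h⟩ : S)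
  · simpa [glue, h] using continuous_const

end Piecewise

section StrSepCont

variable {T : Type*} [DecidableEq T] {X : T → Type*} [∀ t, TopologicalSpace (X t)]
  {a : ∀ t, X t} {Y : Type*} [MetricSpace Y] {f : ↥(SigmaProd a) → Y} {u : ↥(SigmaProd a)}

theorem StrSepContAt.tendsto_dist_piecewisePt
    (hu : StrSepContAt (sOpen_sigmaProd a) inferInstance f u) (S : Finset T) :
    Tendsto (fun x => dist (f x) (f (piecewisePt S u.1 x))) (𝓝 u) (𝓝 0) := by
  induction S using Finset.induction_on with
  | empty => simp [piecewisePt]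
  | @insert t S _ ih =>
    have hS : Tendsto (piecewisePt S u.1) (𝓝 u) (𝓝 u) := by
      simpa using (continuous_piecewisePt S u.1).tendsto u
    have hsum := ih.add ((hu t).comp hS)
    rw [add_zero] at hsum
    refine squeeze_zero (fun _ => dist_nonneg) (fun x => ?_) hsum
    rw [piecewisePt_insert]
    exact dist_triangle _ _ _

theorem StrSepContAt.eventually_dist_lt_of_continuousAt
    (hu : StrSepContAt (sOpen_sigmaProd a) inferInstance f u) {v : ↥(SigmaProd a)}
    {S : Finset T} (hvu : piecewisePt S v.1 u = v) (huv : piecewisePt S u.1 v = u) {ε : ℝ}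
    (hv : ContinuousAt f v)
    (hnear : ∀ᶠ y in 𝓝 v, dist (f y) (f (piecewisePt S u.1 y)) < ε) :
    ∀ᶠ x in 𝓝 u, dist (f x) (f u) < 4 * ε := by
  have hvu_dist : dist (f v) (f u) < ε := by simpa [huv] using hnear.self_of_nhds
  have hε : 0 < ε := dist_nonneg.trans_lt hvu_dist
  have hψ : Tendsto (piecewisePt S v.1) (𝓝 u) (𝓝 v) := by
    simpa [hvu] using (continuous_piecewisePt S v.1).tendsto u
  have hxu := (hu.tendsto_dist_piecewisePt S).eventually_lt_const hε
  have hψ_near := hψ.eventually hnear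
  have hψv : ∀ᶠ x in 𝓝 u, dist (f (piecewisePt S v.1 x)) (f v) < ε :=
    Metric.tendsto_nhds.mp (hv.tendsto.comp hψ) ε hε
  filter_upwards [hxu, hψ_near, hψv] with x h₁ h₂ h₃
  rw [piecewisePt_piecewisePt, dist_comm] at h₂
  calc dist (f x) (f u)
      ≤ dist (f x) (f (piecewisePt S u.1 x)) + dist (f (piecewisePt S u.1 x))
          (f (piecewisePt S v.1 x)) + dist (f (piecewisePt S v.1 x)) (f v) + dist (f v) (f u) :=
        (dist_triangle _ (f v) _).trans (by gcongr; exact dist_triangle4 _ _ _ _)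
    _ < 4 * ε := by linarith

end StrSepCont

/-- The discontinuity point set of a strongly separately continuous mapping on
`(σ(a), τ)` is nearly open. -/
theorem discontinuitySet_nearlyOpen {T : Type*} [DecidableEq T] {X : T → Type*}
    [∀ t, TopologicalSpace (X t)] (a : ∀ t, X t) {Y : Type*} [MetricSpace Y]
    (f : ↥(SigmaProd a) → Y)
    (hf : ∀ u : ↥(SigmaProd a), StrSepContAt (sOpen_sigmaProd a) inferInstance f u) :
    NearlyOpen a {u : ↥(SigmaProd a) | ¬ ContinuousAt f u} := by
  intro S
  rw [isOpen_iff_eventually]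
  intro z₀ hz₀
  set u : ↥(SigmaProd a) := ⟨glue a S z₀, glue_mem a S z₀⟩
  obtain ⟨ε, hε, hfar⟩ : ∃ ε > 0, ∃ᶠ x in 𝓝 u, ε ≤ dist (f x) (f u) := by
    simpa [ContinuousAt, Metric.tendsto_nhds] using hz₀
  have hnear : ∀ᶠ x in 𝓝 u, ∀ᶠ y in 𝓝 x, dist (f y) (f (piecewisePt S u.1 y)) < ε / 4 :=
    (((hf u).tendsto_dist_piecewisePt S).eventually_lt_const (by positivity)).eventually_nhds
  have hglue := ((continuous_glue S).subtype_mk (glue_mem a S)).tendsto z₀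
  filter_upwards [hglue.eventually hnear] with z hz hv
  have hclose := (hf u).eventually_dist_lt_of_continuousAt
    (piecewisePt_glue S z z₀) (piecewisePt_glue S z₀ z) hv hz
  rw [mul_div_cancel₀ ε four_ne_zero] at hclose
  exact hfar (hclose.mono fun x hx => not_le.mpr hx)
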